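/- arXiv:1804.09353 — 2 statements merged into one kernel-verified Lean document; each statement's English description precedes it below -/
import Mathlib

section
/- Let S be a commutative monoid, e ∈ S an idempotent such that Se is linearly ordered (for all a, b ∈ Se, Sa ⊆ Sb or Sb ⊆ Sa), A a left S-act, and a₁, a₂, a₃ ∈ A with e·aₖ = aₖ for k = 1,2,3. Suppose s, t ∈ S satisfy s·a₁ = s·a₂ and t·a₂ = t·a₃. Then t·a₃ = t·a₁ or s·a₃ = s·a₁. -/
lemma transfer_aux (S : Type*) [CommMonoid S] (e : S)
    (A : Type*) [MulAction S A] (b c : A)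
    (hb : e • b = b) (hc : e • c = c) (s t u : S)
    (hu : s * e = u * (t * e)) (htbc : t • b = t • c) :
    s • b = s • c := by
  calc s • b = (s * e) • b := by rw [mul_smul, hb]
    _ = u • t • (e • b) := by rw [hu, mul_smul, mul_smul]
    _ = u • t • b := by rw [hb]
    _ = u • t • c := by rw [htbc]
    _ = u • t • (e • c) := by rw [hc]
    _ = (s * e) • c := by rw [hu, mul_smul, mul_smul]
    _ = s • c := by rw [mul_smul, hc]

/-- Let `S` be a commutative monoid, `e` an idempotent with `Se`
linearly ordered, `A` a left `S`-act and `a₁, a₂, a₃ ∈ A` with `e • aₖ = aₖ`.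
If `s • a₁ = s • a₂` and `t • a₂ = t • a₃`, then `t • a₃ = t • a₁` or
`s • a₃ = s • a₁`. -/
theorem three_elements_transfer (S : Type*) [CommMonoid S] (e : S) (he : e * e = e)
    (hlin : ∀ a ∈ {x : S | ∃ u : S, x = u * e}, ∀ b ∈ {x : S | ∃ u : S, x = u * e},
      {x : S | ∃ u : S, x = u * a} ⊆ {x : S | ∃ u : S, x = u * b} ∨
      {x : S | ∃ u : S, x = u * b} ⊆ {x : S | ∃ u : S, x = u * a})
    (A : Type*) [MulAction S A] (a₁ a₂ a₃ : A)
    (h1 : e • a₁ = a₁) (h2 : e • a₂ = a₂) (h3 : e • a₃ = a₃)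
    (s t : S) (hs : s • a₁ = s • a₂) (ht : t • a₂ = t • a₃) :
    t • a₃ = t • a₁ ∨ s • a₃ = s • a₁ := by
  rcases hlin (s * e) ⟨s, rfl⟩ (t * e) ⟨t, rfl⟩ with h | h
  · -- S(se) ⊆ S(te): se = u * te
    obtain ⟨u, hu⟩ := h ⟨1, (one_mul _).symm⟩
    right
    have : s • a₂ = s • a₃ := transfer_aux S e A a₂ a₃ h2 h3 s t u hu ht
    rw [← this, hs]
  · obtain ⟨u, hu⟩ := h ⟨1, (one_mul _).symm⟩
    left
    have : t • a₁ = t • a₂ := transfer_aux S e A a₁ a₂ h1 h2 t s u hu hs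
    rw [← ht, this]
end

section
/- Let S be a monoid, A a left S-act, and a ∈ A an act-regular element, i.e., there exists an S-act homomorphism φ : Sa → S with φ(a)·a = a. Then, setting k = φ(a), the map g : Sk → Sa defined by g(s·k) = s·a is a well-defined isomorphism of S-acts sending k to a. -/
/-- Let `S` be a monoid, `A` a left `S`-act, and `a ∈ A`
act-regular via an `S`-act homomorphism `φ : Sa → S` (encoded as `φ : A → S`
equivariant on `Sa = {t • a : t ∈ S}`) with `φ(a) • a = a`. Setting
`k = φ(a)`, the map `g : Sk → Sa`, `g(s * k) = s • a`, is well defined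
(`s * k = t * k → s • a = t • a`) and there is a map `g : S → A` realizing it
that is injective on `Sk`, maps `Sk` onto `Sa`, is equivariant on `Sk`, and
sends `k` to `a`: an isomorphism of `S`-acts `Sk ≅ Sa`. -/
theorem act_regular_gives_iso (S : Type*) [Monoid S] (A : Type*) [MulAction S A]
    (a : A) (φ : A → S)
    (hom : ∀ s t : S, φ (s • (t • a)) = s * φ (t • a))
    (hreg : φ a • a = a) :
    (∀ s t : S, s * φ a = t * φ a → s • a = t • a) ∧
    ∃ g : S → A,
      (∀ s : S, g (s * φ a) = s • a) ∧
      (∀ s t : S, g (s * (t * φ a)) = s • g (t * φ a)) ∧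
      Set.InjOn g {x : S | ∃ s : S, x = s * φ a} ∧
      g '' {x : S | ∃ s : S, x = s * φ a} = {y : A | ∃ s : S, y = s • a} ∧
      g (φ a) = a := by
  have hφ : ∀ s : S, φ (s • a) = s * φ a := by
    intro s
    have := hom s 1
    simpa using this
  have key : ∀ s : S, (s * φ a) • a = s • a := by
    intro s
    rw [mul_smul, hreg]
  refine ⟨fun s t h => by rw [← key s, ← key t, h], (· • a), key, ?_, ?_, ?_, hreg⟩
  · intro s t
    show (s * (t * φ a)) • a = s • (t * φ a) • a
    rw [key t, ← mul_assoc, key (s * t), mul_smul]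
  · rintro x ⟨s, rfl⟩ y ⟨t, rfl⟩ h
    simp only [key] at h
    rw [← hφ s, ← hφ t, h]
  · ext y
    constructor
    · rintro ⟨x, ⟨s, rfl⟩, rfl⟩
      exact ⟨s, key s⟩
    · rintro ⟨s, rfl⟩
      exact ⟨s * φ a, ⟨s, rfl⟩, key s⟩
end
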